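/- Let Δ be a (d−1)-dimensional Buchsbaum simplicial complex (over a field k extending ℂ) admitting a free action by the group ℤ/pℤ with p prime. Then h_i(Δ) ≡ (−1)^i binom(d,i) (mod p) for all i = 0,…,d. -/

import Mathlib

/-!
Common framework: abstract simplicial complexes on `Fin n`, their `f`- and `h`-vectors,
(relative) simplicial cohomology with field coefficients, free actions of `ℤ/pℤ` given by a
permutation `e`, eigen-Betti numbers, Stanley--Reisner ideals and graded/equivariant pieces of
Artinian reductions.
-/

namespace GroupActionsSR

open scoped BigOperators

/-- An abstract simplicial complex on the vertex set `Fin n` (always containing `∅`). -/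
structure SC (n : ℕ) where
  faces : Finset (Finset (Fin n))
  empty_mem : ∅ ∈ faces
  down_closed : ∀ σ ∈ faces, ∀ τ ⊆ σ, τ ∈ faces

variable {n : ℕ}

/-- `fnum Δ j` is the number of faces with `j` vertices, i.e. `f_{j-1}(Δ)`. -/
def fnum (Δ : SC n) (j : ℕ) : ℕ := (Δ.faces.filter fun σ => σ.card = j).card

/-- the `h`-vector of a `(d-1)`-dimensional complex:
`h_i = ∑_{j=0}^i (-1)^{i-j} C(d-j, i-j) f_{j-1}`. -/
def hvec (Δ : SC n) (d i : ℕ) : ℤ :=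
  ∑ j ∈ Finset.range (i + 1),
    (-1 : ℤ) ^ (i - j) * ((d - j).choose (i - j) : ℤ) * (fnum Δ j : ℤ)

/-- `Δ` has dimension `d - 1`. -/
def SC.hasDim (Δ : SC n) (d : ℕ) : Prop :=
  (∀ σ ∈ Δ.faces, σ.card ≤ d) ∧ ∃ σ ∈ Δ.faces, σ.card = d

/-- `Δ` is pure of dimension `d-1`. -/
def SC.Pure (Δ : SC n) (d : ℕ) : Prop :=
  ∀ σ ∈ Δ.faces, ∃ τ ∈ Δ.faces, σ ⊆ τ ∧ τ.card = d

/-- the set of faces of the link of `σ` in `Δ`. -/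
def linkF (Δ : SC n) (σ : Finset (Fin n)) : Finset (Finset (Fin n)) :=
  Δ.faces.filter fun τ => Disjoint σ τ ∧ σ ∪ τ ∈ Δ.faces

/-- the set of faces of the star of `σ` in `Δ`. -/
def starF (Δ : SC n) (σ : Finset (Fin n)) : Finset (Finset (Fin n)) :=
  Δ.faces.filter fun τ => σ ∪ τ ∈ Δ.faces

/-- A free simplicial action of `ℤ/pℤ` on `Δ`, the generator acting by the permutation `e`:
`e^p = 1`, `e` maps faces to faces, and no nonempty face is mapped to itself by a
non-identity power. -/
def FreeActionBy (Δ : SC n) (e : Equiv.Perm (Fin n)) (p : ℕ) : Prop :=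
  e ^ p = 1 ∧ (∀ σ ∈ Δ.faces, σ.image ⇑e ∈ Δ.faces) ∧
    ∀ σ ∈ Δ.faces, σ ≠ ∅ → ∀ l : ℕ, 0 < l → l < p → σ.image ⇑(e ^ l) ≠ σ

/-- A very free simplicial action of `ℤ/pℤ` on `Δ`:
`st σ ∩ st (g·σ) = {∅}` for all nonempty faces `σ` and non-identity `g`. -/
def VeryFreeActionBy (Δ : SC n) (e : Equiv.Perm (Fin n)) (p : ℕ) : Prop :=
  e ^ p = 1 ∧ (∀ σ ∈ Δ.faces, σ.image ⇑e ∈ Δ.faces) ∧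
    ∀ σ ∈ Δ.faces, σ ≠ ∅ → ∀ l : ℕ, 0 < l → l < p →
      ∀ τ, τ ∈ starF Δ σ → τ ∈ starF Δ (σ.image ⇑(e ^ l)) → τ = ∅

section Complexes

variable (R : Type*) [CommRing R]

/-- the faces of `F` which contain `S` and have `t` vertices.  These index a basis of the space
of relative simplicial `(t-1)`-cochains of the pair `(F, cost_F S)`. -/
def RF (F : Finset (Finset (Fin n))) (S : Finset (Fin n)) (t : ℤ) : Type :=
  {σ : Finset (Fin n) // σ ∈ F ∧ S ⊆ σ ∧ (σ.card : ℤ) = t}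

/-- the simplicial coboundary map on (relative) cochains. -/
noncomputable def cb (F : Finset (Finset (Fin n))) (S : Finset (Fin n)) (t : ℤ) :
    (RF F S t → R) →ₗ[R] (RF F S (t + 1) → R) where
  toFun f τ := ∑ v ∈ τ.1, (-1 : R) ^ (τ.1.filter (· < v)).card *
      (if h : τ.1.erase v ∈ F ∧ S ⊆ τ.1.erase v ∧ ((τ.1.erase v).card : ℤ) = t
        then f ⟨τ.1.erase v, h⟩ else 0)
  map_add' f g := by
    funext τ
    simp only [Pi.add_apply]
    rw [← Finset.sum_add_distrib]
    refine Finset.sum_congr rfl fun v _ => ?_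
    by_cases h : τ.1.erase v ∈ F ∧ S ⊆ τ.1.erase v ∧ ((τ.1.erase v).card : ℤ) = t
    · simp only [dif_pos h, Pi.add_apply, mul_add]; exact mul_add _ _ _
    · simp only [dif_neg h, mul_zero, add_zero]
  map_smul' c f := by
    funext τ
    simp only [Pi.smul_apply, smul_eq_mul, RingHom.id_apply, Finset.mul_sum]
    refine Finset.sum_congr rfl fun v _ => ?_
    by_cases h : τ.1.erase v ∈ F ∧ S ⊆ τ.1.erase v ∧ ((τ.1.erase v).card : ℤ) = t
    · simp only [dif_pos h, Pi.smul_apply, smul_eq_mul]; exact mul_left_comm _ _ _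
    · simp only [dif_neg h, mul_zero, smul_zero]

/-- the cohomology of a two-step complex `C1 → C2 → C3` at the middle spot. -/
abbrev cohOf {C1 C2 C3 : Type*} [AddCommGroup C1] [AddCommGroup C2] [AddCommGroup C3]
    [Module R C1] [Module R C2] [Module R C3]
    (d1 : C1 →ₗ[R] C2) (d2 : C2 →ₗ[R] C3) : Type _ :=
  LinearMap.ker d2 ⧸ (LinearMap.range d1).comap (LinearMap.ker d2).subtype

open Classical in
/-- the endomorphism of `cohOf d1 d2` induced by a chain map `φ` at the middle spot
(junk value `0` if `φ` is not compatible with the complex). -/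
noncomputable def cohEnd {C1 C2 C3 : Type*} [AddCommGroup C1] [AddCommGroup C2] [AddCommGroup C3]
    [Module R C1] [Module R C2] [Module R C3]
    (d1 : C1 →ₗ[R] C2) (d2 : C2 →ₗ[R] C3) (φ : C2 →ₗ[R] C2) :
    cohOf R d1 d2 →ₗ[R] cohOf R d1 d2 :=
  if h : (∀ x ∈ LinearMap.ker d2, φ x ∈ LinearMap.ker d2) ∧
      (∀ x ∈ LinearMap.range d1, φ x ∈ LinearMap.range d1) then
    Submodule.mapQ _ _ (φ.restrict h.1)
      (fun x hx => by
        have hx' : (x : C2) ∈ LinearMap.range d1 := hx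
        have := h.2 x.1 hx'
        simpa only [Submodule.mem_comap, LinearMap.restrict_apply, Submodule.subtype_apply] using this)
  else 0

/-- relative simplicial cohomology `H^t(F, cost_F S)` (living on faces of cardinality `t+1`);
for `S = ∅` this is reduced simplicial cohomology `H̃^t(F)`. -/
noncomputable abbrev cohm (F : Finset (Finset (Fin n))) (S : Finset (Fin n)) (t : ℤ) : Type _ :=
  cohOf R (cb R F S t) (cb R F S (t + 1))

end Complexes

/-- the reduced Betti number `β_t(F) = dim_k H̃^t(F; k)`. -/
noncomputable def betti (k : Type*) [Field k] (F : Finset (Finset (Fin n))) (t : ℤ) : ℕ :=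
  Module.finrank k (cohm k F ∅ t)

/-- `Δ` is Buchsbaum over `k`: it is pure of dimension `d-1` and
`β_i(lk σ) = 0` for all nonempty faces `σ` and all `i < dim lk σ`. -/
def Buchsbaum (k : Type*) [Field k] (Δ : SC n) (d : ℕ) : Prop :=
  Δ.Pure d ∧ ∀ σ ∈ Δ.faces, σ ≠ ∅ →
    ∀ i : ℤ, i < (d : ℤ) - (σ.card : ℤ) - 1 → betti k (linkF Δ σ) i = 0

/-- the sign of the permutation that `e` induces on the (ordered) vertices of `σ`,
computed as `(-1)^(number of inversions)`. -/
def faceSign (e : Equiv.Perm (Fin n)) (σ : Finset (Fin n)) : ℤ :=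
  (-1 : ℤ) ^ ((σ ×ˢ σ).filter fun q => q.1 < q.2 ∧ e q.2 < e q.1).card

/-- the action of the simplicial automorphism `e` on simplicial cochains:
`(e · f)(σ) = ε(e⁻¹, σ) f(e⁻¹ σ)`. -/
noncomputable def cact (k : Type*) [Field k] (e : Equiv.Perm (Fin n))
    (F : Finset (Finset (Fin n))) (S : Finset (Fin n)) (t : ℤ) :
    (RF F S t → k) →ₗ[k] (RF F S t → k) where
  toFun f σ := faceSign e⁻¹ σ.1 •
      (if h : σ.1.image ⇑e⁻¹ ∈ F ∧ S ⊆ σ.1.image ⇑e⁻¹ ∧ ((σ.1.image ⇑e⁻¹).card : ℤ) = t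
        then f ⟨σ.1.image ⇑e⁻¹, h⟩ else 0)
  map_add' f g := by
    funext σ
    simp only [Pi.add_apply]
    by_cases h : σ.1.image ⇑e⁻¹ ∈ F ∧ S ⊆ σ.1.image ⇑e⁻¹ ∧ ((σ.1.image ⇑e⁻¹).card : ℤ) = t
    · simp only [dif_pos h, Pi.add_apply, smul_add]; exact smul_add _ _ _
    · simp only [dif_neg h, smul_zero, add_zero]
  map_smul' c f := by
    funext σ
    simp only [Pi.smul_apply, RingHom.id_apply]
    by_cases h : σ.1.image ⇑e⁻¹ ∈ F ∧ S ⊆ σ.1.image ⇑e⁻¹ ∧ ((σ.1.image ⇑e⁻¹).card : ℤ) = t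
    · simp only [dif_pos h, Pi.smul_apply]
      rw [smul_comm]; rfl
    · simp only [dif_neg h, smul_zero]

/-- the dimension of the `μ`-eigenspace of `f`. -/
noncomputable def eigenDim (k : Type*) [Field k] {M : Type*} [AddCommGroup M] [Module k M]
    (f : M →ₗ[k] M) (μ : k) : ℕ :=
  Module.finrank k (LinearMap.ker (f - μ • LinearMap.id))

/-- the action induced by `e` on reduced simplicial cohomology `H̃^t(F; k)`. -/
noncomputable def cohAction (k : Type*) [Field k] (e : Equiv.Perm (Fin n))
    (F : Finset (Finset (Fin n))) (t : ℤ) : cohm k F ∅ t →ₗ[k] cohm k F ∅ t :=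
  cohEnd k (cb k F ∅ t) (cb k F ∅ (t + 1)) (cact k e F ∅ (t + 1))

/-- the refined Betti number `β_t(F)^μ`: the dimension of the `μ`-eigenspace of the action of
the generator `e` on `H̃^t(F; k)`. -/
noncomputable def bettiEig (k : Type*) [Field k] (e : Equiv.Perm (Fin n))
    (F : Finset (Finset (Fin n))) (t : ℤ) (μ : k) : ℕ :=
  eigenDim k (cohAction k e F t) μ

section Ring

variable (k : Type*) [Field k]

/-- the Stanley--Reisner ideal of `Δ` in `A = k[x_1, …, x_n]`. -/
noncomputable def SRIdeal (Δ : SC n) : Ideal (MvPolynomial (Fin n) k) :=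
  Ideal.span {f | ∃ σ : Finset (Fin n), σ ∉ Δ.faces ∧ f = ∏ i ∈ σ, MvPolynomial.X i}

/-- the dimension of the `(i, μ)`-component of `A ⧸ K`: the image of the homogeneous
degree-`i` polynomials `f` with `(rename e) f ≡ μ • f (mod K)`, i.e. the `μ`-eigenspace of the
degree-`i` part of `A ⧸ K` for the action induced by the permutation `e` of the variables. -/
noncomputable def pieceDim (K : Ideal (MvPolynomial (Fin n) k)) (e : Equiv.Perm (Fin n))
    (i : ℕ) (μ : k) : ℕ :=
  Module.finrank k (Submodule.map (Ideal.Quotient.mkₐ k K).toLinearMap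
    ((MvPolynomial.homogeneousSubmodule (Fin n) k i) ⊓
      Submodule.comap
        (((MvPolynomial.rename ⇑e :
            MvPolynomial (Fin n) k →ₐ[k] MvPolynomial (Fin n) k).toLinearMap
          - μ • LinearMap.id : MvPolynomial (Fin n) k →ₗ[k] MvPolynomial (Fin n) k))
        (Submodule.restrictScalars k K)))

/-- the dimension of the full degree-`i` component of `A ⧸ K`. -/
noncomputable def pieceDimTot (K : Ideal (MvPolynomial (Fin n) k)) (i : ℕ) : ℕ :=
  Module.finrank k (Submodule.map (Ideal.Quotient.mkₐ k K).toLinearMap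
    (MvPolynomial.homogeneousSubmodule (Fin n) k i))

set_option synthInstance.maxHeartbeats 1000000 in
/-- the preimage in `A` of the sigma module
`Σ(Θ; k[Δ]) = Θk[Δ] + ∑ᵢ ((θ_1, …, θ̂_i, …, θ_d)k[Δ] :_{k[Δ]} θ_i) ⊆ k[Δ]`. -/
noncomputable def sigmaIdealA (Δ : SC n) {d : ℕ} (Θ : Fin d → MvPolynomial (Fin n) k) :
    Ideal (MvPolynomial (Fin n) k) :=
  Ideal.comap (Ideal.Quotient.mk (SRIdeal k Δ))
    (Ideal.span (Set.range fun i => Ideal.Quotient.mk (SRIdeal k Δ) (Θ i)) ⊔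
      ⨆ i : Fin d,
        Submodule.colon
          (Ideal.span ((fun i' => Ideal.Quotient.mk (SRIdeal k Δ) (Θ i')) '' {i' | i' ≠ i}))
          (Ideal.span {Ideal.Quotient.mk (SRIdeal k Δ) (Θ i)}))

/-- `Θ` is a linear system of parameters for `k[Δ]`: it consists of linear forms and the
Artinian reduction `k[Δ]/Θk[Δ] = A/(I_Δ + (Θ))` is finite-dimensional over `k`. -/
def IsLsop (Δ : SC n) {d : ℕ} (Θ : Fin d → MvPolynomial (Fin n) k) : Prop :=
  (∀ i, Θ i ∈ MvPolynomial.homogeneousSubmodule (Fin n) k 1) ∧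
  FiniteDimensional k (MvPolynomial (Fin n) k ⧸ (SRIdeal k Δ ⊔ Ideal.span (Set.range Θ)))

end Ring


section Extras

/-- the basis of the direct sum, over all `U ∈ ℕⁿ` with `supp U ∈ Δ` and `|U| = j`, of the
relative simplicial cochains `C^{t-1}(Δ, cost_Δ s(U))`: pairs `(U, σ)` with `σ ∈ Δ`,
`s(U) ⊆ σ`, `|U| = j`, `#σ = t`. -/
def RT (Δ : SC n) (j : ℕ) (t : ℤ) : Type :=
  {x : (Fin n → ℕ) × Finset (Fin n) //
    x.2 ∈ Δ.faces ∧ (Finset.univ.filter fun i => x.1 i ≠ 0) ⊆ x.2 ∧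
      (∑ i, x.1 i) = j ∧ ((x.2.card : ℤ)) = t}

variable (k : Type*) [Field k]

/-- the simplicial coboundary map on `⊕_{U ∈ T(Δ)_j} C^{t-1}(Δ, cost_Δ s(U))`. -/
noncomputable def rtd (Δ : SC n) (j : ℕ) (t : ℤ) :
    (RT Δ j t → k) →ₗ[k] (RT Δ j (t + 1) → k) where
  toFun f x := ∑ v ∈ x.1.2, (-1 : k) ^ (x.1.2.filter (· < v)).card *
      (if h : x.1.2.erase v ∈ Δ.faces ∧
          (Finset.univ.filter fun i => x.1.1 i ≠ 0) ⊆ x.1.2.erase v ∧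
          (∑ i, x.1.1 i) = j ∧ (((x.1.2.erase v).card : ℤ)) = t
        then f ⟨(x.1.1, x.1.2.erase v), h⟩ else 0)
  map_add' f g := by
    funext x
    simp only [Pi.add_apply]
    rw [← Finset.sum_add_distrib]
    refine Finset.sum_congr rfl fun v _ => ?_
    by_cases h : x.1.2.erase v ∈ Δ.faces ∧
        (Finset.univ.filter fun i => x.1.1 i ≠ 0) ⊆ x.1.2.erase v ∧
        (∑ i, x.1.1 i) = j ∧ (((x.1.2.erase v).card : ℤ)) = t
    · simp only [dif_pos h, Pi.add_apply, mul_add]; exact mul_add _ _ _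
    · simp only [dif_neg h, mul_zero, add_zero]
  map_smul' c f := by
    funext x
    simp only [Pi.smul_apply, smul_eq_mul, RingHom.id_apply, Finset.mul_sum]
    refine Finset.sum_congr rfl fun v _ => ?_
    by_cases h : x.1.2.erase v ∈ Δ.faces ∧
        (Finset.univ.filter fun i => x.1.1 i ≠ 0) ⊆ x.1.2.erase v ∧
        (∑ i, x.1.1 i) = j ∧ (((x.1.2.erase v).card : ℤ)) = t
    · simp only [dif_pos h, Pi.smul_apply, smul_eq_mul]; exact mul_left_comm _ _ _
    · simp only [dif_neg h, mul_zero, smul_zero]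

/-- the action of a simplicial automorphism `g` of `Δ` on
`⊕_{U ∈ T(Δ)_j} C^{t-1}(Δ, cost_Δ s(U))`:  `(g · f)(U, σ) = ± f(g⁻¹ · U, g⁻¹ · σ)`. -/
noncomputable def rtact (Δ : SC n) (j : ℕ) (t : ℤ) (g : Equiv.Perm (Fin n)) :
    (RT Δ j t → k) →ₗ[k] (RT Δ j t → k) where
  toFun f x := faceSign g⁻¹ x.1.2 •
      (if h : x.1.2.image ⇑g⁻¹ ∈ Δ.faces ∧
          (Finset.univ.filter fun i => (x.1.1 ∘ ⇑g) i ≠ 0) ⊆ x.1.2.image ⇑g⁻¹ ∧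
          (∑ i, (x.1.1 ∘ ⇑g) i) = j ∧ (((x.1.2.image ⇑g⁻¹).card : ℤ)) = t
        then f ⟨(x.1.1 ∘ ⇑g, x.1.2.image ⇑g⁻¹), h⟩ else 0)
  map_add' f g' := by
    funext x
    simp only [Pi.add_apply]
    by_cases h : x.1.2.image ⇑g⁻¹ ∈ Δ.faces ∧
        (Finset.univ.filter fun i => (x.1.1 ∘ ⇑g) i ≠ 0) ⊆ x.1.2.image ⇑g⁻¹ ∧
        (∑ i, (x.1.1 ∘ ⇑g) i) = j ∧ (((x.1.2.image ⇑g⁻¹).card : ℤ)) = t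
    · simp only [dif_pos h, Pi.add_apply, smul_add]; exact smul_add _ _ _
    · simp only [dif_neg h, smul_zero, add_zero]
  map_smul' c f := by
    funext x
    simp only [Pi.smul_apply, RingHom.id_apply]
    by_cases h : x.1.2.image ⇑g⁻¹ ∈ Δ.faces ∧
        (Finset.univ.filter fun i => (x.1.1 ∘ ⇑g) i ≠ 0) ⊆ x.1.2.image ⇑g⁻¹ ∧
        (∑ i, (x.1.1 ∘ ⇑g) i) = j ∧ (((x.1.2.image ⇑g⁻¹).card : ℤ)) = t
    · simp only [dif_pos h, Pi.smul_apply]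
      rw [smul_comm]; rfl
    · simp only [dif_neg h, smul_zero]

/-- the basis of `Hom_A(K_t, k[Δ])_{-j}` where `K_•` is the Koszul complex on
`x_1^{j+1}, …, x_n^{j+1}`: pairs `(σ, V)` where `#σ = t` and `x^V` is a monomial of `k[Δ]` of
degree `(j+1)t - j`. -/
def KT (Δ : SC n) (j : ℕ) (t : ℤ) : Type :=
  {x : Finset (Fin n) × (Fin n → ℕ) //
    ((x.1.card : ℤ) = t) ∧ (Finset.univ.filter fun i => x.2 i ≠ 0) ∈ Δ.faces ∧
      ((∑ i, x.2 i : ℕ) : ℤ) = (j + 1) * t - j}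

/-- the differential of the complex `Hom_A(K_•, k[Δ])_{-j}`, whose `i`-th cohomology is the
graded piece `H_𝔪^i(k[Δ])_{-j}` of local cohomology. -/
noncomputable def ktd (Δ : SC n) (j : ℕ) (t : ℤ) :
    (KT Δ j t → k) →ₗ[k] (KT Δ j (t + 1) → k) where
  toFun f x := ∑ v ∈ x.1.1, (-1 : k) ^ (x.1.1.filter (· < v)).card *
      (if h : j + 1 ≤ x.1.2 v ∧ (((x.1.1.erase v).card : ℤ) = t) ∧
          (Finset.univ.filter fun i => (fun i' => x.1.2 i' - if i' = v then j + 1 else 0) i ≠ 0)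
            ∈ Δ.faces ∧
          ((∑ i, (fun i' => x.1.2 i' - if i' = v then j + 1 else 0) i : ℕ) : ℤ) = (j + 1) * t - j
        then f ⟨(x.1.1.erase v, fun i' => x.1.2 i' - if i' = v then j + 1 else 0), h.2⟩ else 0)
  map_add' f g := by
    funext x
    simp only [Pi.add_apply]
    rw [← Finset.sum_add_distrib]
    refine Finset.sum_congr rfl fun v _ => ?_
    by_cases h : j + 1 ≤ x.1.2 v ∧ (((x.1.1.erase v).card : ℤ) = t) ∧
        (Finset.univ.filter fun i => (fun i' => x.1.2 i' - if i' = v then j + 1 else 0) i ≠ 0)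
          ∈ Δ.faces ∧
        ((∑ i, (fun i' => x.1.2 i' - if i' = v then j + 1 else 0) i : ℕ) : ℤ) = (j + 1) * t - j
    · simp only [dif_pos h, Pi.add_apply, mul_add]; exact mul_add _ _ _
    · simp only [dif_neg h, mul_zero, add_zero]
  map_smul' c f := by
    funext x
    simp only [Pi.smul_apply, smul_eq_mul, RingHom.id_apply, Finset.mul_sum]
    refine Finset.sum_congr rfl fun v _ => ?_
    by_cases h : j + 1 ≤ x.1.2 v ∧ (((x.1.1.erase v).card : ℤ) = t) ∧
        (Finset.univ.filter fun i => (fun i' => x.1.2 i' - if i' = v then j + 1 else 0) i ≠ 0)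
          ∈ Δ.faces ∧
        ((∑ i, (fun i' => x.1.2 i' - if i' = v then j + 1 else 0) i : ℕ) : ℤ) = (j + 1) * t - j
    · simp only [dif_pos h, Pi.smul_apply, smul_eq_mul]; exact mul_left_comm _ _ _
    · simp only [dif_neg h, mul_zero, smul_zero]

/-- the action of a simplicial automorphism `g` of `Δ` on `Hom_A(K_t, k[Δ])_{-j}`. -/
noncomputable def ktact (Δ : SC n) (j : ℕ) (t : ℤ) (g : Equiv.Perm (Fin n)) :
    (KT Δ j t → k) →ₗ[k] (KT Δ j t → k) where
  toFun f x := faceSign g⁻¹ x.1.1 •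
      (if h : ((x.1.1.image ⇑g⁻¹).card : ℤ) = t ∧
          (Finset.univ.filter fun i => (x.1.2 ∘ ⇑g) i ≠ 0) ∈ Δ.faces ∧
          ((∑ i, (x.1.2 ∘ ⇑g) i : ℕ) : ℤ) = (j + 1) * t - j
        then f ⟨(x.1.1.image ⇑g⁻¹, x.1.2 ∘ ⇑g), h⟩ else 0)
  map_add' f g' := by
    funext x
    simp only [Pi.add_apply]
    by_cases h : ((x.1.1.image ⇑g⁻¹).card : ℤ) = t ∧
        (Finset.univ.filter fun i => (x.1.2 ∘ ⇑g) i ≠ 0) ∈ Δ.faces ∧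
        ((∑ i, (x.1.2 ∘ ⇑g) i : ℕ) : ℤ) = (j + 1) * t - j
    · simp only [dif_pos h, Pi.add_apply, smul_add]; exact smul_add _ _ _
    · simp only [dif_neg h, smul_zero, add_zero]
  map_smul' c f := by
    funext x
    simp only [Pi.smul_apply, RingHom.id_apply]
    by_cases h : ((x.1.1.image ⇑g⁻¹).card : ℤ) = t ∧
        (Finset.univ.filter fun i => (x.1.2 ∘ ⇑g) i ≠ 0) ∈ Δ.faces ∧
        ((∑ i, (x.1.2 ∘ ⇑g) i : ℕ) : ℤ) = (j + 1) * t - j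
    · simp only [dif_pos h, Pi.smul_apply]
      rw [smul_comm]; rfl
    · simp only [dif_neg h, smul_zero]

/-- the isotypic component `N^χ = {m : M | g • m = χ(g) • m for all g}` of a family of
linear endomorphisms indexed by `G`. -/
noncomputable def isotyp {M : Type*} [AddCommGroup M] [Module k M]
    {G : Type*} (act : G → (M →ₗ[k] M)) (χ : G → k) : Submodule k M :=
  ⨅ g : G, LinearMap.ker (act g - χ g • LinearMap.id)

/-- the simplicial boundary map on (reduced) simplicial chains with integer coefficients. -/
noncomputable def bd (F : Finset (Finset (Fin n))) (t : ℤ) :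
    (RF F ∅ (t + 1) → ℤ) →ₗ[ℤ] (RF F ∅ t → ℤ) where
  toFun c σ := ∑ v ∈ Finset.univ \ σ.1, (-1 : ℤ) ^ (σ.1.filter (· < v)).card *
      (if h : insert v σ.1 ∈ F ∧ (∅ : Finset (Fin n)) ⊆ insert v σ.1 ∧
          (((insert v σ.1).card : ℤ)) = t + 1
        then c ⟨insert v σ.1, h⟩ else 0)
  map_add' c c' := by
    funext σ
    simp only [Pi.add_apply]
    rw [← Finset.sum_add_distrib]
    refine Finset.sum_congr rfl fun v _ => ?_
    by_cases h : insert v σ.1 ∈ F ∧ (∅ : Finset (Fin n)) ⊆ insert v σ.1 ∧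
        (((insert v σ.1).card : ℤ)) = t + 1
    · simp only [dif_pos h, Pi.add_apply, mul_add]; exact mul_add _ _ _
    · simp only [dif_neg h, mul_zero, add_zero]
  map_smul' a c := by
    funext σ
    simp only [Pi.smul_apply, smul_eq_mul, RingHom.id_apply, Finset.mul_sum]
    refine Finset.sum_congr rfl fun v _ => ?_
    by_cases h : insert v σ.1 ∈ F ∧ (∅ : Finset (Fin n)) ⊆ insert v σ.1 ∧
        (((insert v σ.1).card : ℤ)) = t + 1
    · simp only [dif_pos h, Pi.smul_apply, smul_eq_mul]; exact mul_left_comm _ _ _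
    · simp only [dif_neg h, mul_zero, smul_zero]

/-- reduced simplicial homology `H̃_t(F; ℤ)` with integer coefficients. -/
noncomputable abbrev homologyZ (F : Finset (Finset (Fin n))) (t : ℤ) : Type _ :=
  cohOf ℤ (bd F (t + 1)) (bd F t)

/-- the geometric realization `|Δ| ⊆ ℝⁿ` of `Δ`. -/
noncomputable def geomReal (Δ : SC n) : Set (Fin n → ℝ) :=
  {x | (∀ i, 0 ≤ x i) ∧ ∑ i, x i = 1 ∧ (Finset.univ.filter fun i => x i ≠ 0) ∈ Δ.faces}

end Extras

/-! A free `ℤ/pℤ`-action permutes the faces with `j ≥ 1` vertices without fixed points, so its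
orbits all have size `p` and `p ∣ f_{j-1}`. In `h_i - (-1)^i C(d,i)` only the terms with `j ≥ 1`
survive, since `f_{-1} = 1` contributes exactly `(-1)^i C(d,i)`. -/

theorem _root_.Function.prime_dvd_card_of_iterate_eq_id {α : Type*} [Fintype α] {p : ℕ}
    (hp : p.Prime) {f : α → α} (hf : f^[p] = id) (hfix : ∀ a, f a ≠ a) :
    p ∣ Fintype.card α := by
  classical
  have : Fact p.Prime := ⟨hp⟩
  have hmod := Equiv.Perm.card_fixedPoints_modEq (f := f) (n := 1) (by rw [pow_one]; exact hf)
  have hnone : Fintype.card (Function.fixedPoints f) = 0 :=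
    Fintype.card_eq_zero_iff.mpr ⟨fun a => hfix a.1 a.2⟩
  exact Nat.modEq_zero_iff_dvd.mp (hnone ▸ hmod)

lemma fnum_zero (Δ : SC n) : fnum Δ 0 = 1 := by
  rw [fnum, Finset.card_eq_one]
  refine ⟨∅, Finset.ext fun σ => ?_⟩
  simp only [Finset.mem_filter, Finset.card_eq_zero, Finset.mem_singleton]
  exact ⟨And.right, by rintro rfl; exact ⟨Δ.empty_mem, rfl⟩⟩

lemma dvd_hvec_sub_of_dvd_fnum (Δ : SC n) (d i : ℕ) {m : ℤ}
    (hm : ∀ j, 1 ≤ j → m ∣ fnum Δ j) : m ∣ hvec Δ d i - (-1) ^ i * (d.choose i : ℤ) := by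
  rw [hvec, Finset.sum_range_succ', fnum_zero]
  simp only [Nat.sub_zero, Nat.cast_one, mul_one, add_sub_cancel_right]
  exact Finset.dvd_sum fun j _ => (hm (j + 1) j.succ_pos).mul_left _

lemma FreeActionBy.prime_dvd_fnum {Δ : SC n} {e : Equiv.Perm (Fin n)} {p : ℕ}
    (hfree : FreeActionBy Δ e p) (hp : p.Prime) {j : ℕ} (hj : 1 ≤ j) : p ∣ fnum Δ j := by
  obtain ⟨hep, hmem, hfix⟩ := hfree
  let T := Δ.faces.filter fun σ => σ.card = j
  have hT : ∀ σ ∈ T, σ.image ⇑e ∈ T := fun σ hσ => by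
    rw [Finset.mem_filter] at hσ ⊢
    exact ⟨hmem σ hσ.1, (Finset.card_image_of_injective σ e.injective).trans hσ.2⟩
  let f : T → T := fun σ => ⟨σ.1.image ⇑e, hT σ.1 σ.2⟩
  have hf : ∀ l (σ : T), (f^[l] σ).1 = σ.1.image ⇑(e ^ l) := fun l => by
    induction l with
    | zero => simp
    | succ l ih =>
      intro σ
      rw [Function.iterate_succ_apply']
      change (f^[l] σ).1.image ⇑e = _
      rw [ih, pow_succ', Equiv.Perm.coe_mul, ← Finset.image_image]
  have hfp : f^[p] = id := funext fun σ => Subtype.ext (by simp [hf, hep])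
  have hnofix : ∀ σ, f σ ≠ σ := fun σ hσ => by
    obtain ⟨hσΔ, hσj⟩ := Finset.mem_filter.mp σ.2
    have hne : σ.1 ≠ ∅ := (Finset.card_pos.mp (by omega)).ne_empty
    exact hfix σ.1 hσΔ hne 1 one_pos hp.one_lt (by rw [pow_one]; exact congrArg Subtype.val hσ)
  rw [fnum, ← Fintype.card_coe]
  exact Function.prime_dvd_card_of_iterate_eq_id hp hfp hnofix

theorem stmt5_h_vector_congruence_general
    (n d p : ℕ) (hp : p.Prime)
    (Δ : SC n)
    (e : Equiv.Perm (Fin n)) (hfree : FreeActionBy Δ e p) :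
    ∀ i ≤ d, (p : ℤ) ∣ (hvec Δ d i - (-1) ^ i * (d.choose i : ℤ)) :=
  fun i _ => dvd_hvec_sub_of_dvd_fnum Δ d i fun _ hj => Int.natCast_dvd_natCast.mpr
    (hfree.prime_dvd_fnum hp hj)

/-- if a `(d-1)`-dimensional Buchsbaum complex admits a free action of
`ℤ/pℤ` (`p` prime), then `h_i(Δ) ≡ (-1)^i C(d,i) (mod p)` for all `i = 0, …, d`. -/
theorem stmt5_h_vector_congruence
    (n d p : ℕ) (hp : p.Prime) (k : Type) [Field k] [Algebra ℂ k]
    (Δ : SC n) (hdim : Δ.hasDim d) (hB : Buchsbaum k Δ d)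
    (e : Equiv.Perm (Fin n)) (hfree : FreeActionBy Δ e p) :
    ∀ i ≤ d, (p : ℤ) ∣ (hvec Δ d i - (-1) ^ i * (d.choose i : ℤ)) :=
  stmt5_h_vector_congruence_general n d p hp Δ e hfree

end GroupActionsSR
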